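/- Let β≥0 and f∈𝓜_s(β). Then f(N)T_{f²} is relatively bounded with respect to f(N)^β: there exists a constant a>0 such that ‖f(N)T_{f²}φ‖ ≤ a‖f(N)^βφ‖ for all φ∈ℓ²_fin(ℕ), where f² denotes n↦f(n)² and f(N)^β is the multiplication operator ξ_n ↦ f(n)^βξ_n. -/

import Mathlib

open Filter Topology
open scoped ENNReal

noncomputable section

abbrev l2 : Type := lp (fun _ : ℕ => ℂ) 2

def xi (n : ℕ) : l2 := lp.single 2 n 1

def FinSupp (φ : l2) : Prop := (Function.support (⇑φ : ℕ → ℂ)).Finite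

/-- The class 𝒦. -/
def MemK (f : ℕ → ℝ) : Prop := 0 < f 0 ∧ ∀ n, f n < f (n + 1)

/-- The class 𝒦⁻. -/
def MemKminus (f : ℕ → ℝ) : Prop := MemK f ∧ Summable (fun n => 1 / (f n) ^ 2)

def fsq (f : ℕ → ℝ) : ℕ → ℝ := fun n => (f n) ^ 2

/-- the sequence of the multiplication operator `f(N)` applied to φ -/
def mulSeq (f : ℕ → ℝ) (φ : ℕ → ℂ) : ℕ → ℂ := fun n => ((f n : ℝ) : ℂ) * φ n

/-- the sequence of `f(N)^p` applied to φ -/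
def powSeq (f : ℕ → ℝ) (p : ℕ) (φ : ℕ → ℂ) : ℕ → ℂ := fun n => (((f n) ^ p : ℝ) : ℂ) * φ n

/-- coordinates of `T_{f,m} φ`. -/
def TfmSeq (f : ℕ → ℝ) (m : ℕ) (φ : ℕ → ℂ) : ℕ → ℂ := fun n =>
  Complex.I * ∑ k ∈ Finset.Icc 1 m,
    ((if k ≤ n then φ (n - k) / ((f n - f (n - k) : ℝ) : ℂ) else 0)
      - φ (n + k) / ((f (n + k) - f n : ℝ) : ℂ))

/-- `(φ, ψ)` is in the graph of `T_f`. -/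
def InGraphTf (f : ℕ → ℝ) (φ ψ : l2) : Prop :=
  ∃ h : ∀ m, Memℓp (TfmSeq f m (⇑φ)) 2,
    Tendsto (fun m => (⟨TfmSeq f m (⇑φ), h m⟩ : l2)) atTop (𝓝 ψ)


/-- The conditions that `g, h` witness membership of `f` in `𝓜(β)`:
`g : ℕ → (0,∞)`, `h ∈ ℓ¹(ℕ_{≥1})`, `∑_n f(n)²/g(n) < ∞`, and
`g(n) / (f(n)^β Δ_k(f², n))² ≤ h(k)²` for all `n` and all `k ≥ 1`. -/
def MWitness (β : ℝ) (f g h : ℕ → ℝ) : Prop :=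
  (∀ n, 0 < g n) ∧
  Summable (fun k : ℕ => |h (k + 1)|) ∧
  Summable (fun n => (f n) ^ 2 / g n) ∧
  ∀ n k : ℕ, 1 ≤ k →
    g n / (Real.rpow (f n) β * ((f (n + k)) ^ 2 - (f n) ^ 2)) ^ 2 ≤ (h k) ^ 2

/-- The class `𝓜(β)`. -/
def MemM (β : ℝ) (f : ℕ → ℝ) : Prop := MemKminus f ∧ ∃ g h : ℕ → ℝ, MWitness β f g h

/-- The class `𝓜_s(β)`: as `𝓜(β)`, with a uniform bound `C` on the sums
`∑_{k=1}^n g(n) / (f(n-k)^β (f(n)² - f(n-k)²))²` for the same witness `g`. -/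
def MemMs (β : ℝ) (f : ℕ → ℝ) : Prop :=
  MemKminus f ∧ ∃ g h : ℕ → ℝ, MWitness β f g h ∧
    ∃ C : ℝ, 0 < C ∧ ∀ n : ℕ,
      (∑ k ∈ Finset.Icc 1 n,
        g n / (Real.rpow (f (n - k)) β * ((f n) ^ 2 - (f (n - k)) ^ 2)) ^ 2) < C

/-- the sequence of `f(N)^β` (real power) applied to `φ` -/
def rpowSeq (f : ℕ → ℝ) (β : ℝ) (φ : ℕ → ℂ) : ℕ → ℂ :=
  fun n => ((Real.rpow (f n) β : ℝ) : ℂ) * φ n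

/-!
For finitely supported `φ` the coordinates of `T_{f²}φ` are finite sums, and with
`ψ = f(N)^β φ` the quantity `f(n) |(T_{f²}φ)(n)|` is dominated by a part below the diagonal
(`ψ(n - k)`) and a part above it (`ψ(n + k)`). Cauchy–Schwarz and the `𝓜_s` bound `C` give
`C f(n)²/g(n) ‖ψ‖²` for the square of the lower part at `n`, which is summable in `n`.
Above the diagonal, the `𝓜` condition and `f(n)^β ≤ f(n + k)^β` bound the `(n, n + k)`
coefficient by `√G |h(k)|` with `G = ∑ f(n)²/g(n)`, so that part is dominated by a convolution
with the `ℓ¹` sequence `|h|`, of norm at most `√G ∑ |h(k)|`.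
-/

open Finset

lemma sum_Icc_one_le_tsum_succ {w : ℕ → ℝ} (hw : ∀ k, 0 ≤ w k) (hs : Summable fun k => w (k + 1))
    (M : ℕ) : ∑ k ∈ Icc 1 M, w k ≤ ∑' k, w (k + 1) := by
  rw [← Ico_add_one_right_eq_Icc, sum_Ico_eq_sum_range]
  simpa [add_comm] using hs.sum_le_tsum (range M) fun k _ => hw _

lemma sum_sq_sum_mul_shift_le {s t : Finset ℕ} {c : ℕ → ℕ → ℝ} {w x : ℕ → ℝ} {A B : ℝ}
    (hA : 0 ≤ A) (hw : ∀ k ∈ s, 0 ≤ w k) (hc : ∀ n ∈ t, ∀ k ∈ s, c n k ^ 2 ≤ A * w k ^ 2)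
    (hx : ∀ u : Finset ℕ, ∑ m ∈ u, x m ^ 2 ≤ B) :
    ∑ n ∈ t, (∑ k ∈ s, c n k * x (n + k)) ^ 2 ≤ A * (∑ k ∈ s, w k) ^ 2 * B := by
  have hshift (k : ℕ) : ∑ n ∈ t, x (n + k) ^ 2 ≤ B := by
    simpa using hx (t.map (addRightEmbedding k))
  calc ∑ n ∈ t, (∑ k ∈ s, c n k * x (n + k)) ^ 2
      ≤ ∑ n ∈ t, (∑ k ∈ s, w k) * ∑ k ∈ s, A * w k * x (n + k) ^ 2 := by
        refine sum_le_sum fun n hn => sum_sq_le_sum_mul_sum_of_sq_le_mul s hw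
          (fun k hk => by have := hw k hk; positivity) fun k hk => ?_
        have := mul_le_mul_of_nonneg_right (hc n hn k hk) (sq_nonneg (x (n + k)))
        linarith [mul_pow (c n k) (x (n + k)) 2]
    _ = (∑ k ∈ s, w k) * (A * ∑ k ∈ s, w k * ∑ n ∈ t, x (n + k) ^ 2) := by
        rw [← mul_sum, sum_comm]
        simp only [mul_sum, mul_assoc]
    _ ≤ (∑ k ∈ s, w k) * (A * ∑ k ∈ s, w k * B) := by
        have := sum_nonneg hw
        gcongr with k hk
        · exact hw k hk
        · exact hshift k
    _ = A * (∑ k ∈ s, w k) ^ 2 * B := by rw [← sum_mul]; ring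

lemma sum_norm_sq_le_norm_sq (ψ : l2) (t : Finset ℕ) : ∑ n ∈ t, ‖ψ n‖ ^ 2 ≤ ‖ψ‖ ^ 2 := by
  simpa [Real.rpow_two] using lp.sum_rpow_le_norm_rpow (p := 2) (by norm_num) ψ t

lemma exists_memℓp_two_norm_le {X : ℕ → ℂ} {B : ℝ} (hB : 0 ≤ B)
    (hX : ∀ t : Finset ℕ, ∑ n ∈ t, ‖X n‖ ^ 2 ≤ B ^ 2) :
    ∃ hm : Memℓp X 2, ‖(⟨X, hm⟩ : l2)‖ ≤ B := by
  have hX' : ∀ t : Finset ℕ, ∑ n ∈ t, ‖X n‖ ^ (2 : ℝ≥0∞).toReal ≤ B ^ (2 : ℝ≥0∞).toReal := by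
    simpa [Real.rpow_two] using hX
  exact ⟨memℓp_gen' hX', lp.norm_le_of_forall_sum_le (by norm_num) hB hX'⟩

lemma FinSupp.exists_forall_ge_eq_zero {φ : l2} (hφ : FinSupp φ) :
    ∃ S, ∀ j, S ≤ j → φ j = 0 := by
  obtain ⟨S, hS⟩ := hφ.bddAbove
  exact ⟨S + 1, fun j hj => by_contra fun hne => by have := hS hne; omega⟩

lemma memℓp_rpowSeq {φ : l2} (hφ : FinSupp φ) (f : ℕ → ℝ) (β : ℝ) :
    Memℓp (rpowSeq f β ⇑φ) 2 :=
  (memℓp_zero (hφ.subset fun n hn h0 => hn (by simp [rpowSeq, h0]))).of_exponent_ge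
    zero_le

lemma MemK.strictMono {f : ℕ → ℝ} (hf : MemK f) : StrictMono f :=
  strictMono_nat_of_lt_succ hf.2

lemma MemK.pos {f : ℕ → ℝ} (hf : MemK f) (n : ℕ) : 0 < f n :=
  hf.1.trans_le (hf.strictMono.monotone n.zero_le)

lemma MemK.strictMono_fsq {f : ℕ → ℝ} (hf : MemK f) : StrictMono (fsq f) :=
  fun _ _ hab => pow_lt_pow_left₀ (hf.strictMono hab) (hf.pos _).le two_ne_zero

lemma MWitness.sq_div_le_tsum {β : ℝ} {f g h : ℕ → ℝ} (hw : MWitness β f g h) (n : ℕ) :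
    f n ^ 2 / g n ≤ ∑' m, f m ^ 2 / g m :=
  hw.2.2.1.le_tsum n fun m _ => div_nonneg (sq_nonneg _) (hw.1 m).le

lemma TfmSeq_eq_of_le {f : ℕ → ℝ} {φ : ℕ → ℂ} {S n M m : ℕ} (hφ : ∀ j, S ≤ j → φ j = 0)
    (hnM : n ≤ M) (hSM : S ≤ M) (hMm : M ≤ m) : TfmSeq f m φ n = TfmSeq f M φ n := by
  unfold TfmSeq
  congr 1
  refine (sum_subset (Icc_subset_Icc_right hMm) fun k hk hk' => ?_).symm
  simp only [mem_Icc, not_and, not_le] at hk hk'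
  rw [if_neg (by omega), hφ (n + k) (by omega), zero_div, sub_zero]

lemma InGraphTf.apply_eq {f : ℕ → ℝ} {φ ψ : l2} {S n M : ℕ} (hT : InGraphTf f φ ψ)
    (hφ : ∀ j, S ≤ j → φ j = 0) (hnM : n ≤ M) (hSM : S ≤ M) : ψ n = TfmSeq f M φ n := by
  obtain ⟨_, hlim⟩ := hT
  refine tendsto_nhds_unique (((lp.lipschitzWith_one_eval 2 n).continuous.tendsto ψ).comp hlim)
    (tendsto_const_nhds.congr' ?_)
  filter_upwards [eventually_ge_atTop M] with m hm using (TfmSeq_eq_of_le hφ hnM hSM hm).symm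

lemma TfmSeq_eq_lower_sub_upper (f : ℕ → ℝ) (φ : ℕ → ℂ) {n M : ℕ} (hnM : n ≤ M) :
    TfmSeq f M φ n = Complex.I * (∑ k ∈ Icc 1 n, φ (n - k) / ((f n - f (n - k) : ℝ) : ℂ)
      - ∑ k ∈ Icc 1 M, φ (n + k) / ((f (n + k) - f n : ℝ) : ℂ)) := by
  rw [TfmSeq, sum_sub_distrib, ← sum_filter]
  congr 3
  ext k
  simp only [mem_filter, mem_Icc]
  omega

lemma norm_TfmSeq_le {f : ℕ → ℝ} (hf : Monotone f) (φ : ℕ → ℂ) {n M : ℕ} (hnM : n ≤ M) :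
    ‖TfmSeq f M φ n‖ ≤ ∑ k ∈ Icc 1 n, ‖φ (n - k)‖ / (f n - f (n - k))
      + ∑ k ∈ Icc 1 M, ‖φ (n + k)‖ / (f (n + k) - f n) := by
  have norm_div_sub {a : ℂ} {i j : ℕ} (hij : i ≤ j) :
      ‖a / ((f j - f i : ℝ) : ℂ)‖ = ‖a‖ / (f j - f i) := by
    rw [norm_div, Complex.norm_real, Real.norm_of_nonneg (sub_nonneg.2 (hf hij))]
  rw [TfmSeq_eq_lower_sub_upper f φ hnM, norm_mul, Complex.norm_I, one_mul]
  refine (norm_sub_le _ _).trans (add_le_add ?_ ?_) <;> refine (norm_sum_le _ _).trans_eq ?_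
  · exact sum_congr rfl fun k _ => norm_div_sub (Nat.sub_le n k)
  · exact sum_congr rfl fun k _ => norm_div_sub (Nat.le_add_right n k)

def lowerMajorant (β : ℝ) (f : ℕ → ℝ) (ψ : ℕ → ℂ) (n : ℕ) : ℝ :=
  ∑ k ∈ Icc 1 n, f n / (f (n - k) ^ β * (f n ^ 2 - f (n - k) ^ 2)) * ‖ψ (n - k)‖

def upperMajorant (β : ℝ) (f : ℕ → ℝ) (M : ℕ) (ψ : ℕ → ℂ) (n : ℕ) : ℝ :=
  ∑ k ∈ Icc 1 M, f n / (f (n + k) ^ β * (f (n + k) ^ 2 - f n ^ 2)) * ‖ψ (n + k)‖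

lemma norm_rpowSeq {f : ℕ → ℝ} (β : ℝ) (φ : ℕ → ℂ) {m : ℕ} (hf : 0 < f m) :
    ‖rpowSeq f β φ m‖ = f m ^ β * ‖φ m‖ := by
  rw [rpowSeq, Real.rpow_eq_pow, norm_mul, Complex.norm_real,
    Real.norm_of_nonneg (Real.rpow_nonneg hf.le β)]

lemma mul_norm_TfmSeq_fsq_le {f : ℕ → ℝ} (hf : MemK f) (β : ℝ) (φ : ℕ → ℂ) {n M : ℕ}
    (hnM : n ≤ M) : f n * ‖TfmSeq (fsq f) M φ n‖
      ≤ lowerMajorant β f (rpowSeq f β φ) n + upperMajorant β f M (rpowSeq f β φ) n := by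
  have weigh (m : ℕ) (D : ℝ) : f n * (‖φ m‖ / D) = f n / (f m ^ β * D) * ‖rpowSeq f β φ m‖ := by
    have := (Real.rpow_pos_of_pos (hf.pos m) β).ne'
    rw [norm_rpowSeq β φ (hf.pos m)]
    field_simp
  refine (mul_le_mul_of_nonneg_left (norm_TfmSeq_le hf.strictMono_fsq.monotone φ hnM)
    (hf.pos n).le).trans_eq ?_
  simp only [mul_add, mul_sum, weigh, lowerMajorant, upperMajorant, fsq]

lemma sq_lowerMajorant_le {β C g : ℝ} {f : ℕ → ℝ} {n : ℕ} (hg : 0 < g)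
    (hC : ∑ k ∈ Icc 1 n, g / (f (n - k) ^ β * (f n ^ 2 - f (n - k) ^ 2)) ^ 2 ≤ C) (ψ : l2) :
    lowerMajorant β f ψ n ^ 2 ≤ C * (f n ^ 2 / g) * ‖ψ‖ ^ 2 := by
  have hreindex : ∑ k ∈ Icc 1 n, ‖ψ (n - k)‖ ^ 2 ≤ ‖ψ‖ ^ 2 := by
    have := sum_norm_sq_le_norm_sq ψ ((Icc 1 n).image (n - ·))
    rwa [sum_image fun a ha b hb hab => by simp only [coe_Icc, Set.mem_Icc] at ha hb hab; omega] at this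
  calc lowerMajorant β f ψ n ^ 2
      ≤ (∑ k ∈ Icc 1 n, g / (f (n - k) ^ β * (f n ^ 2 - f (n - k) ^ 2)) ^ 2)
        * ∑ k ∈ Icc 1 n, f n ^ 2 / g * ‖ψ (n - k)‖ ^ 2 :=
        sum_sq_le_sum_mul_sum_of_sq_le_mul _ (fun _ _ => by positivity)
          (fun _ _ => by positivity) fun k _ => le_of_eq (by field_simp)
    _ ≤ C * (f n ^ 2 / g * ‖ψ‖ ^ 2) := by
        have : 0 ≤ C := (sum_nonneg fun _ _ => by positivity).trans hC
        rw [← mul_sum]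
        gcongr
    _ = C * (f n ^ 2 / g) * ‖ψ‖ ^ 2 := by ring

lemma sq_upper_coeff_le {β c g : ℝ} {f : ℕ → ℝ} (hf : MemK f) (hβ : 0 ≤ β) (hg : 0 < g)
    {n k : ℕ} (hk : 1 ≤ k) (hc : g / (f n ^ β * (f (n + k) ^ 2 - f n ^ 2)) ^ 2 ≤ c) :
    (f n / (f (n + k) ^ β * (f (n + k) ^ 2 - f n ^ 2))) ^ 2 ≤ f n ^ 2 / g * c := by
  have hΔ : 0 < f (n + k) ^ 2 - f n ^ 2 := sub_pos.2 (hf.strictMono_fsq (by omega : n < n + k))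
  have hD : 0 < f n ^ β * (f (n + k) ^ 2 - f n ^ 2) :=
    mul_pos (Real.rpow_pos_of_pos (hf.pos n) β) hΔ
  calc (f n / (f (n + k) ^ β * (f (n + k) ^ 2 - f n ^ 2))) ^ 2
      ≤ (f n / (f n ^ β * (f (n + k) ^ 2 - f n ^ 2))) ^ 2 := by
        have hmono : f n ^ β ≤ f (n + k) ^ β :=
          Real.rpow_le_rpow (hf.pos n).le (hf.strictMono.monotone (Nat.le_add_right n k)) hβ
        have hfn := (hf.pos n).le
        have hD' := hD.trans_le (mul_le_mul_of_nonneg_right hmono hΔ.le)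
        gcongr
    _ = f n ^ 2 / g * (g / (f n ^ β * (f (n + k) ^ 2 - f n ^ 2)) ^ 2) := by field_simp
    _ ≤ f n ^ 2 / g * c := by gcongr

lemma sum_sq_upperMajorant_le {β : ℝ} {f g h : ℕ → ℝ} (hf : MemK f) (hβ : 0 ≤ β)
    (hw : MWitness β f g h) (ψ : l2) (M : ℕ) (t : Finset ℕ) :
    ∑ n ∈ t, upperMajorant β f M ψ n ^ 2
      ≤ (∑' n, f n ^ 2 / g n) * (∑' k, |h (k + 1)|) ^ 2 * ‖ψ‖ ^ 2 := by
  have hG := hw.sq_div_le_tsum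
  obtain ⟨hg, hh, -, hgh⟩ := hw
  have hG0 : 0 ≤ ∑' n, f n ^ 2 / g n := tsum_nonneg fun n => div_nonneg (sq_nonneg _) (hg n).le
  calc ∑ n ∈ t, upperMajorant β f M ψ n ^ 2
      ≤ (∑' n, f n ^ 2 / g n) * (∑ k ∈ Icc 1 M, |h k|) ^ 2 * ‖ψ‖ ^ 2 := by
        refine sum_sq_sum_mul_shift_le
          (c := fun n k => f n / (f (n + k) ^ β * (f (n + k) ^ 2 - f n ^ 2)))
          (w := fun k => |h k|) (x := fun m => ‖ψ m‖) hG0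
          (fun _ _ => abs_nonneg _) (fun n _ k hk => ?_) (sum_norm_sq_le_norm_sq ψ)
        rw [sq_abs]
        obtain ⟨hk1, -⟩ := mem_Icc.1 hk
        refine (sq_upper_coeff_le hf hβ (hg n) hk1 (hgh n k hk1)).trans ?_
        gcongr
        exact hG n
    _ ≤ (∑' n, f n ^ 2 / g n) * (∑' k, |h (k + 1)|) ^ 2 * ‖ψ‖ ^ 2 := by
        gcongr
        exact sum_Icc_one_le_tsum_succ (fun _ => abs_nonneg _) hh M

lemma sum_norm_mulSeq_sq_le {β C : ℝ} {f g h : ℕ → ℝ} (hf : MemK f) (hβ : 0 ≤ β)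
    (hw : MWitness β f g h)
    (hC : ∀ n, ∑ k ∈ Icc 1 n, g n / (f (n - k) ^ β * (f n ^ 2 - f (n - k) ^ 2)) ^ 2 < C)
    {φ Tφ ψ : l2} {S : ℕ} (hφ : ∀ j, S ≤ j → φ j = 0) (hT : InGraphTf (fsq f) φ Tφ)
    (hψ : ⇑ψ = rpowSeq f β ⇑φ) (t : Finset ℕ) :
    ∑ n ∈ t, ‖mulSeq f Tφ n‖ ^ 2
      ≤ 2 * (∑' n, f n ^ 2 / g n) * (C + (∑' k, |h (k + 1)|) ^ 2) * ‖ψ‖ ^ 2 := by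
  have ⟨hg, _, hfg, _⟩ := hw
  set M := S + t.sup id
  have hpt : ∀ n ∈ t, ‖mulSeq f Tφ n‖ ≤ lowerMajorant β f ψ n + upperMajorant β f M ψ n := by
    intro n hn
    have hnM : n ≤ M := (le_sup (f := id) hn).trans (Nat.le_add_left _ _)
    rw [mulSeq, norm_mul, Complex.norm_real, Real.norm_of_nonneg (hf.pos n).le,
      hT.apply_eq hφ hnM (Nat.le_add_right _ _), hψ]
    exact mul_norm_TfmSeq_fsq_le hf β φ hnM
  have hlower : ∑ n ∈ t, lowerMajorant β f ψ n ^ 2 ≤ C * (∑' n, f n ^ 2 / g n) * ‖ψ‖ ^ 2 :=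
    calc ∑ n ∈ t, lowerMajorant β f ψ n ^ 2
        ≤ ∑ n ∈ t, C * (f n ^ 2 / g n) * ‖ψ‖ ^ 2 :=
          sum_le_sum fun n _ => sq_lowerMajorant_le (hg n) (hC n).le ψ
      _ = C * (∑ n ∈ t, f n ^ 2 / g n) * ‖ψ‖ ^ 2 := by rw [← sum_mul, ← mul_sum]
      _ ≤ C * (∑' n, f n ^ 2 / g n) * ‖ψ‖ ^ 2 := by
          have : 0 ≤ C := by simpa using (hC 0).le
          gcongr
          exact hfg.sum_le_tsum t fun n _ => div_nonneg (sq_nonneg _) (hg n).le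
  calc ∑ n ∈ t, ‖mulSeq f Tφ n‖ ^ 2
      ≤ ∑ n ∈ t, 2 * (lowerMajorant β f ψ n ^ 2 + upperMajorant β f M ψ n ^ 2) :=
        sum_le_sum fun n hn => (pow_le_pow_left₀ (norm_nonneg _) (hpt n hn) 2).trans add_sq_le
    _ = 2 * (∑ n ∈ t, lowerMajorant β f ψ n ^ 2 + ∑ n ∈ t, upperMajorant β f M ψ n ^ 2) := by
        rw [← mul_sum, sum_add_distrib]
    _ ≤ 2 * (C * (∑' n, f n ^ 2 / g n) * ‖ψ‖ ^ 2
          + (∑' n, f n ^ 2 / g n) * (∑' k, |h (k + 1)|) ^ 2 * ‖ψ‖ ^ 2) := by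
        gcongr
        exact sum_sq_upperMajorant_le hf hβ hw ψ M t
    _ = 2 * (∑' n, f n ^ 2 / g n) * (C + (∑' k, |h (k + 1)|) ^ 2) * ‖ψ‖ ^ 2 := by ring

/-- Let `β ≥ 0` and `f ∈ 𝓜_s(β)`. Then `f(N) T_{f²}` is relatively bounded
w.r.t. `f(N)^β`: there is `a > 0` with `‖f(N) T_{f²} φ‖ ≤ a ‖f(N)^β φ‖` for all finitely
supported `φ`. -/
theorem stmt10 (β : ℝ) (hβ : 0 ≤ β) (f : ℕ → ℝ) (hf : MemMs β f) :
    ∃ a : ℝ, 0 < a ∧ ∀ φ : l2, FinSupp φ → ∀ Tφ : l2, InGraphTf (fsq f) φ Tφ →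
      ∃ (hm : Memℓp (mulSeq f ⇑Tφ) 2) (hb : Memℓp (rpowSeq f β ⇑φ) 2),
        ‖(⟨mulSeq f ⇑Tφ, hm⟩ : l2)‖ ≤ a * ‖(⟨rpowSeq f β ⇑φ, hb⟩ : l2)‖ := by
  obtain ⟨⟨hfK, -⟩, g, h, hw, C, hC0, hC⟩ := hf
  set K := 2 * (∑' n, f n ^ 2 / g n) * (C + (∑' k, |h (k + 1)|) ^ 2)
  have hK0 : 0 < K := by
    have := (div_pos (pow_pos (hfK.pos 0) 2) (hw.1 0)).trans_le (hw.sq_div_le_tsum 0)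
    positivity
  refine ⟨√K, Real.sqrt_pos.2 hK0, fun φ hφ Tφ hT => ?_⟩
  obtain ⟨S, hS⟩ := hφ.exists_forall_ge_eq_zero
  have hb := memℓp_rpowSeq hφ f β
  obtain ⟨hm, hnorm⟩ := exists_memℓp_two_norm_le (B := √K * ‖(⟨_, hb⟩ : l2)‖) (by positivity)
    fun t => by
      rw [mul_pow, Real.sq_sqrt hK0.le]
      exact sum_norm_mulSeq_sq_le hfK hβ hw hC hS hT rfl t
  exact ⟨hm, hb, hnorm⟩
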